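/- arXiv:2410.20462 — 2 statements merged into one kernel-verified Lean document; each statement's English description precedes it below -/
import Mathlib

section
/- Let T be a tree containing a support vertex v of degree 2 that is adjacent to a leaf u and to a non-leaf vertex x. Let T' be the tree obtained from T by deleting the edge uv and adding the new edge ux. Then Φ(T) ≤ Φ(T'). -/
/-- A dissociation set: the induced subgraph has maximum degree at most 1. -/
def SimpleGraph.IsDissocSet {V : Type*} (G : SimpleGraph V) (S : Finset V) : Prop :=
  ∀ a ∈ S, ∀ b ∈ S, ∀ c ∈ S, G.Adj a b → G.Adj a c → b = c

/-- A maximal dissociation set. -/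
def SimpleGraph.IsMaxDissocSet {V : Type*} (G : SimpleGraph V) (S : Finset V) : Prop :=
  G.IsDissocSet S ∧ ∀ T : Finset V, G.IsDissocSet T → S ⊆ T → S = T

/-- `G.phi` is the number of maximal dissociation sets of `G`. -/
noncomputable def SimpleGraph.phi {V : Type*} (G : SimpleGraph V) : ℕ :=
  Set.ncard {S : Finset V | G.IsMaxDissocSet S}

/-- Disjoint union of `k` copies of `G`. -/
def SimpleGraph.copies {V : Type*} (k : ℕ) (G : SimpleGraph V) :
    SimpleGraph (Fin k × V) where
  Adj a b := a.1 = b.1 ∧ G.Adj a.2 b.2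
  symm := ⟨fun a b h => ⟨h.1.symm, h.2.symm⟩⟩
  loopless := ⟨fun a h => h.2.ne rfl⟩

/-- `TstarTree k` is the tree `T*_{3k+1}`: `k` copies of `P₃` plus a new vertex joined to
the middle vertex of each copy. -/
def TstarTree (k : ℕ) : SimpleGraph (Option (Fin k × Fin 3)) :=
  SimpleGraph.fromRel (fun a b =>
    (∃ i, a = some (i, 1) ∧ (b = some (i, 0) ∨ b = some (i, 2))) ∨
    (∃ i, a = none ∧ b = some (i, 1)))

/-- `T*₈`: two copies of `K_{1,3}` (centers 0 and 4) with an edge between leaves 3 and 5. -/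
def Tstar8 : SimpleGraph (Fin 8) :=
  SimpleGraph.fromRel (fun a b =>
    ((a : ℕ), (b : ℕ)) ∈ [(0,1), (0,2), (0,3), (4,5), (4,6), (4,7), (3,5)])

/-- `T*₉`: two copies of `K_{1,3}` (centers 0 and 4) plus a new vertex 8 joined to
leaves 3 and 5. -/
def Tstar9 : SimpleGraph (Fin 9) :=
  SimpleGraph.fromRel (fun a b =>
    ((a : ℕ), (b : ℕ)) ∈ [(0,1), (0,2), (0,3), (4,5), (4,6), (4,7), (8,3), (8,5)])

noncomputable def f1 (n : ℕ) : ℕ :=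
  if n = 5 then 5
  else if n % 3 = 0 then 3 ^ (n / 3)
  else if n % 3 = 1 then 4 * 3 ^ ((n - 4) / 3)
  else 16 * 3 ^ ((n - 8) / 3)

noncomputable def f2 (n : ℕ) : ℕ :=
  if n = 4 then 3
  else if n = 5 then 4
  else if n = 6 then 6
  else if n = 9 then 20
  else if n % 3 = 1 then 11 * 3 ^ ((n - 7) / 3)
  else if n % 3 = 2 then 15 * 3 ^ ((n - 8) / 3)
  else 64 * 3 ^ ((n - 12) / 3)

/-- moving the leaf `u` of a degree-2 support vertex `v` to the
non-leaf neighbour `x` does not decrease the number of maximal dissociation sets. -/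
theorem phi_le_of_move_leaf {V : Type*} [Fintype V] [DecidableEq V]
    (T : SimpleGraph V) [DecidableRel T.Adj] (hT : T.IsTree) (u v x : V)
    (huv : T.Adj v u) (hvx : T.Adj v x)
    (hdv : T.degree v = 2) (hdu : T.degree u = 1) (hdx : T.degree x ≠ 1) :
    T.phi ≤ (T.deleteEdges {s(u, v)} ⊔ SimpleGraph.edge u x).phi := by
  classical
  set T' := T.deleteEdges {s(u, v)} ⊔ SimpleGraph.edge u x with hT'def
  have hvu : v ≠ u := huv.ne
  have hvxne : v ≠ x := hvx.ne
  have huvne : u ≠ v := hvu.symm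
  have hux : u ≠ x := by rintro rfl; exact hdx hdu
  have hNu : ∀ w, T.Adj u w ↔ w = v := by
    intro w
    obtain ⟨a, ha⟩ := Finset.card_eq_one.mp hdu
    have hv : v ∈ T.neighborFinset u := (T.mem_neighborFinset u v).mpr huv.symm
    rw [ha, Finset.mem_singleton] at hv
    rw [← SimpleGraph.mem_neighborFinset, ha, Finset.mem_singleton, ← hv]
  have hNv : ∀ w, T.Adj v w ↔ w = u ∨ w = x := by
    intro w
    obtain ⟨a, b, hab, hset⟩ := Finset.card_eq_two.mp hdv
    have hu' : u ∈ T.neighborFinset v := (T.mem_neighborFinset v u).mpr huv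
    have hx' : x ∈ T.neighborFinset v := (T.mem_neighborFinset v x).mpr hvx
    rw [hset, Finset.mem_insert, Finset.mem_singleton] at hu' hx'
    rw [← SimpleGraph.mem_neighborFinset, hset, Finset.mem_insert, Finset.mem_singleton]
    constructor
    · rintro (rfl | rfl)
      · rcases hu' with h | h
        · exact Or.inl h.symm
        · rcases hx' with h' | h'
          · exact Or.inr h'.symm
          · exact absurd (h.trans h'.symm) hux
      · rcases hu' with h | h
        · rcases hx' with h' | h'
          · exact absurd (h.trans h'.symm) hux
          · exact Or.inr h'.symm
        · exact Or.inl h.symm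
    · rintro (rfl | rfl)
      · exact hu'
      · exact hx'
  have hnux : ¬ T.Adj x u := fun h => hvxne ((hNu x).mp h.symm).symm
  have adjT'iff : ∀ p q, T'.Adj p q ↔
      (T.Adj p q ∧ s(p, q) ≠ s(u, v)) ∨ ((p = u ∧ q = x ∨ p = x ∧ q = u) ∧ p ≠ q) := by
    intro p q
    rw [hT'def]
    simp [SimpleGraph.edge_adj]
  have adjT' : ∀ p q, p ≠ u → q ≠ u → (T'.Adj p q ↔ T.Adj p q) := by
    intro p q hp hq
    rw [adjT'iff]
    constructor
    · rintro (⟨h, -⟩ | ⟨(⟨rfl, rfl⟩ | ⟨rfl, rfl⟩), -⟩)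
      · exact h
      · exact absurd rfl hp
      · exact absurd rfl hq
    · intro h
      refine Or.inl ⟨h, fun he => ?_⟩
      rw [Sym2.eq_iff] at he
      rcases he with ⟨rfl, rfl⟩ | ⟨rfl, rfl⟩
      · exact hp rfl
      · exact hq rfl
  have adjT'u : ∀ q, T'.Adj u q ↔ q = x := by
    intro q
    rw [adjT'iff]
    constructor
    · rintro (⟨h, hne⟩ | ⟨(⟨-, h2⟩ | ⟨h1, h2⟩), hne⟩)
      · exact absurd (by rw [(hNu q).mp h]) hne
      · exact h2
      · exact absurd h1 hux
    · rintro rfl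
      exact Or.inr ⟨Or.inl ⟨rfl, rfl⟩, hux⟩
  have adjT'ux : T'.Adj u x := (adjT'u x).mpr rfl
  have adjT'xv : T'.Adj x v := (adjT' x v (Ne.symm hux) hvu).mpr hvx.symm
  have dmono : ∀ (G : SimpleGraph V) (S W : Finset V), S ⊆ W → G.IsDissocSet W →
      G.IsDissocSet S :=
    fun G S W hSW h a ha b hb c hc => h a (hSW ha) b (hSW hb) c (hSW hc)
  have max_insert : ∀ D : Finset V, T.IsMaxDissocSet D → ∀ w, w ∉ D →
      ∃ a ∈ insert w D, ∃ b ∈ insert w D, ∃ c ∈ insert w D,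
        T.Adj a b ∧ T.Adj a c ∧ b ≠ c := by
    intro D hD w hw
    by_contra h
    push_neg at h
    have heq := hD.2 (insert w D) h (Finset.subset_insert w D)
    apply hw
    rw [heq]
    exact Finset.mem_insert_self w D
  have build_max : ∀ D' : Finset V, T'.IsDissocSet D' →
      (∀ w, w ∉ D' → ¬ T'.IsDissocSet (insert w D')) → T'.IsMaxDissocSet D' := by
    intro D' h1 h2
    refine ⟨h1, fun W hW hsub => Finset.Subset.antisymm hsub ?_⟩
    intro w hwW
    by_contra hwD
    exact h2 w hwD (dmono T' _ W (Finset.insert_subset hwW hsub) hW)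
  have key_u : ∀ D : Finset V, T.IsMaxDissocSet D → u ∉ D → v ∈ D ∧ x ∈ D := by
    intro D hD hu
    obtain ⟨a, ha, b, hb, c, hc, hab, hac, hbc⟩ := max_insert D hD u hu
    have memD : ∀ z, z ∈ insert u D → z ≠ u → z ∈ D :=
      fun z hz hz' => (Finset.mem_insert.mp hz).resolve_left hz'
    by_cases hau : a = u
    · rw [hau] at hab hac
      exact absurd (((hNu b).mp hab).trans ((hNu c).mp hac).symm) hbc
    · have haD : a ∈ D := memD a ha hau
      by_cases hbu : b = u
      · rw [hbu] at hab hbc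
        have hav : a = v := (hNu a).mp hab.symm
        rw [hav] at haD hac
        rcases (hNv c).mp hac with hcu' | hcx
        · exact absurd hcu'.symm hbc
        · exact ⟨haD, hcx ▸ memD c hc (fun e => hux (e.symm.trans hcx))⟩
      · by_cases hcu : c = u
        · rw [hcu] at hac hbc
          have hav : a = v := (hNu a).mp hac.symm
          rw [hav] at haD hab
          rcases (hNv b).mp hab with hbu' | hbx
          · exact absurd hbu' hbu
          · exact ⟨haD, hbx ▸ memD b hb (fun e => hux (e.symm.trans hbx))⟩
        · exact absurd (hD.1 a haD b (memD b hb hbu) c (memD c hc hcu) hab hac) hbc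
  have key_v : ∀ D : Finset V, T.IsMaxDissocSet D → v ∉ D → x ∈ D := by
    intro D hD hv
    obtain ⟨a, ha, b, hb, c, hc, hab, hac, hbc⟩ := max_insert D hD v hv
    have memD : ∀ z, z ∈ insert v D → z ≠ v → z ∈ D :=
      fun z hz hz' => (Finset.mem_insert.mp hz).resolve_left hz'
    by_cases hav : a = v
    · rw [hav] at hab hac
      rcases (hNv b).mp hab with hbu | hbx
      · rcases (hNv c).mp hac with hcu | hcx
        · exact absurd (hbu.trans hcu.symm) hbc
        · exact hcx ▸ memD c hc (fun e => hvxne (e.symm.trans hcx))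
      · exact hbx ▸ memD b hb (fun e => hvxne (e.symm.trans hbx))
    · have haD : a ∈ D := memD a ha hav
      by_cases hbv : b = v
      · rw [hbv] at hab hbc
        rcases (hNv a).mp hab.symm with hau | hax
        · rw [hau] at hac
          exact absurd ((hNu c).mp hac).symm hbc
        · exact hax ▸ haD
      · by_cases hcv : c = v
        · rw [hcv] at hac hbc
          rcases (hNv a).mp hac.symm with hau | hax
          · rw [hau] at hab
            exact absurd ((hNu b).mp hab) hbc
          · exact hax ▸ haD
        · exact absurd (hD.1 a haD b (memD b hb hbv) c (memD c hc hcv) hab hac) hbc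
  have htrans : ∀ D D' : Finset V, T.IsMaxDissocSet D →
      (∀ z ∈ D, z ≠ u → z ∈ D') → ∀ w, w ≠ u → w ≠ v → w ≠ x → w ∉ D →
      ¬ T'.IsDissocSet (insert w D') := by
    intro D D' hD hsub w hwu hwv hwx hwD hdis
    obtain ⟨a, ha, b, hb, c, hc, hab, hac, hbc⟩ := max_insert D hD w hwD
    have memD : ∀ z, z ∈ insert w D → z ≠ w → z ∈ D :=
      fun z hz hz' => (Finset.mem_insert.mp hz).resolve_left hz'
    have hau : a ≠ u := by
      rintro rfl
      exact hbc (((hNu b).mp hab).trans ((hNu c).mp hac).symm)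
    have hside : ∀ p q : V, p ∈ insert w D → q ∈ insert w D → T.Adj a p → T.Adj a q →
        p ≠ q → p ≠ u := by
      intro p q hp hq hap haq hpq hpu
      rw [hpu] at hp hap
      have hav : a = v := (hNu a).mp hap.symm
      rw [hav] at ha haq
      have huD : u ∈ D := memD u hp (Ne.symm hwu)
      have hvD : v ∈ D := memD v ha (Ne.symm hwv)
      rcases (hNv q).mp haq with hqu | hqx
      · exact hpq (hpu.trans hqu.symm)
      · exact hux (hD.1 v hvD u huD x (hqx ▸ memD q hq (fun e => hwx (e.symm.trans hqx)))
          huv hvx)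
    have hbu : b ≠ u := hside b c hb hc hab hac hbc
    have hcu : c ≠ u := hside c b hc hb hac hab hbc.symm
    have mem' : ∀ z, z ∈ insert w D → z ≠ u → z ∈ insert w D' := by
      intro z hz hzu
      rcases Finset.mem_insert.mp hz with rfl | hz'
      · exact Finset.mem_insert_self _ _
      · exact Finset.mem_insert_of_mem (hsub z hz' hzu)
    exact hbc (hdis a (mem' a ha hau) b (mem' b hb hbu) c (mem' c hc hcu)
      ((adjT' a b hau hbu).mpr hab) ((adjT' a c hau hcu).mpr hac))
  have hdis_no_u : ∀ S : Finset V, u ∉ S → T.IsDissocSet S → T'.IsDissocSet S := by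
    intro S hu h a ha b hb c hc hab hac
    have hau : a ≠ u := fun e => hu (e ▸ ha)
    have hbu : b ≠ u := fun e => hu (e ▸ hb)
    have hcu : c ≠ u := fun e => hu (e ▸ hc)
    exact h a ha b hb c hc ((adjT' a b hau hbu).mp hab) ((adjT' a c hau hcu).mp hac)
  set ψ : Finset V → Finset V := fun D =>
    if u ∈ D ∧ x ∈ D ∧ ∃ y ∈ D, T.Adj x y ∧ y ≠ v then D.erase u else D with hψdef
  have hψ_pos : ∀ D : Finset V, (u ∈ D ∧ x ∈ D ∧ ∃ y ∈ D, T.Adj x y ∧ y ≠ v) →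
      ψ D = D.erase u := by
    intro D h
    simp only [hψdef]
    exact if_pos h
  have hψ_neg : ∀ D : Finset V, ¬ (u ∈ D ∧ x ∈ D ∧ ∃ y ∈ D, T.Adj x y ∧ y ≠ v) →
      ψ D = D := by
    intro D h
    simp only [hψdef]
    exact if_neg h
  have hmain : ∀ D : Finset V, T.IsMaxDissocSet D → T'.IsMaxDissocSet (ψ D) := by
    intro D hD
    by_cases hP : u ∈ D ∧ x ∈ D ∧ ∃ y ∈ D, T.Adj x y ∧ y ≠ v
    · -- case B2
      obtain ⟨huD, hxD, y, hyD, hxy, hyv⟩ := hP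
      have hvD : v ∉ D := fun hv => hux (hD.1 v hv u huD x hxD huv hvx)
      rw [hψ_pos D ⟨huD, hxD, y, hyD, hxy, hyv⟩]
      have hyu : y ≠ u := fun e => hnux (e ▸ hxy)
      have hyDe : y ∈ D.erase u := Finset.mem_erase.mpr ⟨hyu, hyD⟩
      have hxDe : x ∈ D.erase u := Finset.mem_erase.mpr ⟨Ne.symm hux, hxD⟩
      refine build_max _ (hdis_no_u _ (Finset.notMem_erase u D)
        (dmono T _ D (Finset.erase_subset u D) hD.1)) ?_
      intro w hw
      by_cases hwu : w = u
      · rw [hwu]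
        intro hdis
        exact hyu (hdis x (Finset.mem_insert_of_mem hxDe) u (Finset.mem_insert_self u _)
          y (Finset.mem_insert_of_mem hyDe) adjT'ux.symm
          ((adjT' x y (Ne.symm hux) hyu).mpr hxy)).symm
      · by_cases hwv : w = v
        · rw [hwv]
          intro hdis
          exact hyv (hdis x (Finset.mem_insert_of_mem hxDe) y (Finset.mem_insert_of_mem hyDe)
            v (Finset.mem_insert_self v _) ((adjT' x y (Ne.symm hux) hyu).mpr hxy) adjT'xv)
        · have hwx : w ≠ x := fun e => hw (by rw [e]; exact hxDe)
          have hwD : w ∉ D := fun h => hw (Finset.mem_erase.mpr ⟨hwu, h⟩)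
          exact htrans D (D.erase u) hD (fun z hz hzu => Finset.mem_erase.mpr ⟨hzu, hz⟩)
            w hwu hwv hwx hwD
    · rw [hψ_neg D hP]
      by_cases huD : u ∈ D
      · by_cases hvD : v ∈ D
        · -- Case A
          have hxD : x ∉ D := fun hx => hux (hD.1 v hvD u huD x hx huv hvx)
          refine build_max _ ?_ ?_
          · intro a ha b hb c hc hab hac
            by_cases hau : a = u
            · rw [hau] at hab
              exact absurd (((adjT'u b).mp hab) ▸ hb) hxD
            · by_cases hbu : b = u
              · rw [hbu] at hab
                exact absurd (((adjT'u a).mp hab.symm) ▸ ha) hxD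
              · by_cases hcu : c = u
                · rw [hcu] at hac
                  exact absurd (((adjT'u a).mp hac.symm) ▸ ha) hxD
                · exact hD.1 a ha b hb c hc ((adjT' a b hau hbu).mp hab)
                    ((adjT' a c hau hcu).mp hac)
          · intro w hw
            by_cases hwx : w = x
            · rw [hwx]
              intro hdis
              exact huvne (hdis x (Finset.mem_insert_self _ _) u (Finset.mem_insert_of_mem huD)
                v (Finset.mem_insert_of_mem hvD) adjT'ux.symm adjT'xv)
            · have hwu : w ≠ u := fun e => hw (by rw [e]; exact huD)
              have hwv : w ≠ v := fun e => hw (by rw [e]; exact hvD)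
              exact htrans D D hD (fun z hz _ => hz) w hwu hwv hwx hw
        · -- Case B1
          have hxD : x ∈ D := key_v D hD hvD
          have hnoy : ∀ y ∈ D, T.Adj x y → y = v := by
            intro y hy hxy
            by_contra hyv
            exact hP ⟨huD, hxD, y, hy, hxy, hyv⟩
          refine build_max _ ?_ ?_
          · intro a ha b hb c hc hab hac
            by_cases hau : a = u
            · rw [hau] at hab hac
              exact ((adjT'u b).mp hab).trans ((adjT'u c).mp hac).symm
            · by_cases hbu : b = u
              · rw [hbu] at hab
                rw [hbu]
                have hax : a = x := (adjT'u a).mp hab.symm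
                rw [hax] at hac
                by_cases hcu : c = u
                · exact hcu.symm
                · exact absurd (hnoy c hc ((adjT' x c (Ne.symm hux) hcu).mp hac))
                    (fun e => hvD (e ▸ hc))
              · by_cases hcu : c = u
                · rw [hcu] at hac
                  rw [hcu]
                  have hax : a = x := (adjT'u a).mp hac.symm
                  rw [hax] at hab
                  exact absurd (hnoy b hb ((adjT' x b (Ne.symm hux) hbu).mp hab))
                    (fun e => hvD (e ▸ hb))
                · exact hD.1 a ha b hb c hc ((adjT' a b hau hbu).mp hab)
                    ((adjT' a c hau hcu).mp hac)
          · intro w hw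
            by_cases hwv : w = v
            · rw [hwv]
              intro hdis
              exact huvne (hdis x (Finset.mem_insert_of_mem hxD) u (Finset.mem_insert_of_mem huD)
                v (Finset.mem_insert_self _ _) adjT'ux.symm adjT'xv)
            · have hwu : w ≠ u := fun e => hw (by rw [e]; exact huD)
              have hwx : w ≠ x := fun e => hw (by rw [e]; exact hxD)
              exact htrans D D hD (fun z hz _ => hz) w hwu hwv hwx hw
      · -- Case C
        obtain ⟨hvD, hxD⟩ := key_u D hD huD
        refine build_max _ (hdis_no_u D huD hD.1) ?_
        intro w hw
        by_cases hwu : w = u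
        · rw [hwu]
          intro hdis
          exact huvne (hdis x (Finset.mem_insert_of_mem hxD) u (Finset.mem_insert_self _ _)
            v (Finset.mem_insert_of_mem hvD) adjT'ux.symm adjT'xv)
        · have hwv : w ≠ v := fun e => hw (by rw [e]; exact hvD)
          have hwx : w ≠ x := fun e => hw (by rw [e]; exact hxD)
          exact htrans D D hD (fun z hz _ => hz) w hwu hwv hwx hw
  have hinj : Set.InjOn ψ {S : Finset V | T.IsMaxDissocSet S} := by
    intro D1 h1 D2 h2 heq
    simp only [Set.mem_setOf_eq] at h1 h2
    by_cases hP1 : u ∈ D1 ∧ x ∈ D1 ∧ ∃ y ∈ D1, T.Adj x y ∧ y ≠ v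
    · by_cases hP2 : u ∈ D2 ∧ x ∈ D2 ∧ ∃ y ∈ D2, T.Adj x y ∧ y ≠ v
      · rw [hψ_pos D1 hP1, hψ_pos D2 hP2] at heq
        rw [← Finset.insert_erase hP1.1, ← Finset.insert_erase hP2.1, heq]
      · rw [hψ_pos D1 hP1, hψ_neg D2 hP2] at heq
        exfalso
        have huD2 : u ∉ D2 := by rw [← heq]; exact Finset.notMem_erase u D1
        obtain ⟨hvD2, hxD2⟩ := key_u D2 h2 huD2
        have hvD1 : v ∈ D1 := by
          rw [← heq] at hvD2
          exact Finset.mem_of_mem_erase hvD2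
        exact hux (h1.1 v hvD1 u hP1.1 x hP1.2.1 huv hvx)
    · by_cases hP2 : u ∈ D2 ∧ x ∈ D2 ∧ ∃ y ∈ D2, T.Adj x y ∧ y ≠ v
      · rw [hψ_neg D1 hP1, hψ_pos D2 hP2] at heq
        exfalso
        have huD1 : u ∉ D1 := by rw [heq]; exact Finset.notMem_erase u D2
        obtain ⟨hvD1, hxD1⟩ := key_u D1 h1 huD1
        have hvD2 : v ∈ D2 := by
          rw [heq] at hvD1
          exact Finset.mem_of_mem_erase hvD1
        exact hux (h2.1 v hvD2 u hP2.1 x hP2.2.1 huv hvx)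
      · rw [hψ_neg D1 hP1, hψ_neg D2 hP2] at heq
        exact heq
  exact Set.ncard_le_ncard_of_injOn ψ (fun D hD => hmain D hD) hinj (Set.toFinite _)
end

section
/- Let T be a tree and let v be a support vertex of T adjacent to k ≥ 3 leaves u_1, …, u_k. Then Φ(T) = Φ(T − u_k) + m, where T − u_k is the tree obtained from T by deleting the leaf u_k, and m is the number of maximal dissociation sets of T that contain both v and u_k. -/
set_option linter.unusedVariables false
set_option linter.unusedSectionVars false
set_option maxHeartbeats 1000000

section Aux
variable {V : Type*} [DecidableEq V]

noncomputable def fdel (w : V) (S : Finset V) : Finset ↥({w}ᶜ : Set V) :=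
  letI : DecidablePred (· ∈ ({w}ᶜ : Set V)) := fun _ => Classical.dec _
  S.subtype _

lemma mem_fdel {w : V} {S : Finset V} {x : ↥({w}ᶜ : Set V)} :
    x ∈ fdel w S ↔ (x : V) ∈ S := by
  simp [fdel, Finset.mem_subtype]

def gins {w : V} (S' : Finset ↥({w}ᶜ : Set V)) : Finset V :=
  S'.map ⟨Subtype.val, Subtype.val_injective⟩

lemma mem_gins_coe {w : V} {S' : Finset ↥({w}ᶜ : Set V)} {x : ↥({w}ᶜ : Set V)} :
    (x : V) ∈ gins S' ↔ x ∈ S' := by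
  simp only [gins, Finset.mem_map, Function.Embedding.coeFn_mk]
  constructor
  · rintro ⟨y, hy, h⟩; rwa [Subtype.val_injective h] at hy
  · intro h; exact ⟨x, h, rfl⟩

lemma mem_gins {w : V} {S' : Finset ↥({w}ᶜ : Set V)} {y : V} :
    y ∈ gins S' ↔ ∃ h : y ≠ w, ⟨y, h⟩ ∈ S' := by
  constructor
  · intro hy
    obtain ⟨x, hx, rfl⟩ := Finset.mem_map.1 hy
    exact ⟨x.2, by simpa using hx⟩
  · rintro ⟨h, hm⟩
    exact mem_gins_coe.2 hm

lemma ne_of_mem_gins {w : V} {S' : Finset ↥({w}ᶜ : Set V)} {y : V}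
    (h : y ∈ gins S') : y ≠ w := (mem_gins.1 h).1

lemma only_nbr {V : Type*} [Fintype V] (G : SimpleGraph V) [DecidableRel G.Adj] {v z : V}
    (hd : G.degree z = 1) (ha : G.Adj v z) : ∀ x, G.Adj z x → x = v := by
  intro x hx
  obtain ⟨c, hc⟩ := Finset.card_eq_one.mp hd
  have h1 : x ∈ G.neighborFinset z := (SimpleGraph.mem_neighborFinset _ _ _).2 hx
  have h2 : v ∈ G.neighborFinset z := (SimpleGraph.mem_neighborFinset _ _ _).2 ha.symm
  rw [hc, Finset.mem_singleton] at h1 h2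
  rw [h1, h2]

end Aux

/-- if `v` is adjacent to `k ≥ 3` leaves `u 0, …, u (k-1)`, then
`Φ(T) = Φ(T − u (k-1)) + m` where `m` counts maximal dissociation sets
containing both `v` and `u (k-1)`. -/
theorem phi_eq_delete_leaf_add {V : Type*} [Fintype V] [DecidableEq V]
    (T : SimpleGraph V) [DecidableRel T.Adj] (hT : T.IsTree)
    (v : V) (k : ℕ) (hk : 3 ≤ k) (u : Fin k → V)
    (hinj : Function.Injective u)
    (hadj : ∀ i, T.Adj v (u i)) (hleaf : ∀ i, T.degree (u i) = 1) :
    T.phi = (T.induce ({u ⟨k - 1, by omega⟩}ᶜ : Set V)).phi +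
      Set.ncard {S : Finset V |
        T.IsMaxDissocSet S ∧ v ∈ S ∧ u ⟨k - 1, by omega⟩ ∈ S} := by
  classical
  have hklt : k - 1 < k := by omega
  set w : V := u ⟨k - 1, hklt⟩ with hwdef
  set a : V := u ⟨0, by omega⟩ with hadef
  set b : V := u ⟨1, by omega⟩ with hbdef
  have hwadj : T.Adj v w := hadj _
  have haadj : T.Adj v a := hadj _
  have hbadj : T.Adj v b := hadj _
  have hwonly : ∀ x, T.Adj w x → x = v := only_nbr T (hleaf _) (hadj _)
  have haonly : ∀ x, T.Adj a x → x = v := only_nbr T (hleaf _) (hadj _)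
  have hbonly : ∀ x, T.Adj b x → x = v := only_nbr T (hleaf _) (hadj _)
  have hab : a ≠ b := by
    intro h
    have := hinj h
    simp [Fin.ext_iff] at this
  have haw : a ≠ w := by
    intro h
    have := hinj h
    simp [Fin.ext_iff] at this
    omega
  have hbw : b ≠ w := by
    intro h
    have := hinj h
    simp [Fin.ext_iff] at this
    omega
  have hwv : w ≠ v := fun h => T.irrefl (h ▸ hwadj)
  have hvw : v ≠ w := hwv.symm
  -- dissociation is downward closed
  have dsub : ∀ {S D : Finset V}, T.IsDissocSet D → S ⊆ D → T.IsDissocSet S :=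
    fun h hs x hx y hy z hz => h x (hs hx) y (hs hy) z (hs hz)
  -- gins preserves dissociation
  have gdis : ∀ {S' : Finset ↥({w}ᶜ : Set V)},
      (T.induce ({w}ᶜ : Set V)).IsDissocSet S' → T.IsDissocSet (gins S') := by
    intro S' h x hx y hy z hz hxy hxz
    obtain ⟨hxw, hx'⟩ := mem_gins.1 hx
    obtain ⟨hyw, hy'⟩ := mem_gins.1 hy
    obtain ⟨hzw, hz'⟩ := mem_gins.1 hz
    have := h _ hx' _ hy' _ hz' hxy hxz
    exact congrArg Subtype.val this
  -- fdel preserves dissociation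
  have fdis : ∀ {S : Finset V}, T.IsDissocSet S →
      (T.induce ({w}ᶜ : Set V)).IsDissocSet (fdel w S) := by
    intro S h x hx y hy z hz hxy hxz
    exact Subtype.ext (h _ (mem_fdel.1 hx) _ (mem_fdel.1 hy) _ (mem_fdel.1 hz) hxy hxz)
  -- fact1 : maximal dissoc sets not containing w have v matched
  have fact1 : ∀ {S : Finset V}, T.IsMaxDissocSet S → w ∉ S →
      v ∈ S ∧ ∃ c ∈ S, c ≠ w ∧ T.Adj v c := by
    intro S hS hw
    by_cases hd : T.IsDissocSet (insert w S)
    · have := hS.2 _ hd (Finset.subset_insert _ _)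
      exact absurd (by rw [this]; exact Finset.mem_insert_self w S) hw
    · rw [SimpleGraph.IsDissocSet] at hd
      push_neg at hd
      obtain ⟨x, hx, y, hy, z, hz, hxy, hxz, hyz⟩ := hd
      rcases Finset.mem_insert.1 hx with hx1 | hx2
      · subst hx1
        exact absurd ((hwonly _ hxy).trans (hwonly _ hxz).symm) hyz
      · rcases Finset.mem_insert.1 hy with hy1 | hy2
        · subst hy1
          have hxv : x = v := hwonly _ hxy.symm
          rcases Finset.mem_insert.1 hz with hz1 | hz2
          · subst hz1
            exact absurd rfl hyz
          · have hzw : z ≠ w := fun h => hw (h ▸ hz2)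
            rw [hxv] at hx2 hxz
            exact ⟨hx2, z, hz2, hzw, hxz⟩
        · rcases Finset.mem_insert.1 hz with hz1 | hz2
          · subst hz1
            have hxv : x = v := hwonly _ hxz.symm
            have hyw : y ≠ w := fun h => hw (h ▸ hy2)
            rw [hxv] at hx2 hxy
            exact ⟨hx2, y, hy2, hyw, hxy⟩
          · exact absurd (hS.1 x hx2 y hy2 z hz2 hxy hxz) hyz
  -- fact2 : a leaf adjacent only to v joins any maximal dissoc set avoiding v
  have fact2 : ∀ {S : Finset V} (z : V), T.IsMaxDissocSet S → v ∉ S →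
      T.Adj v z → (∀ x, T.Adj z x → x = v) → z ∈ S := by
    intro S z hS hv hzv hzonly
    have hdis : T.IsDissocSet (insert z S) := by
      intro x hx y hy c hc hxy hxc
      rcases Finset.mem_insert.1 hx with hx1 | hx2
      · subst hx1
        exact (hzonly _ hxy).trans (hzonly _ hxc).symm
      · rcases Finset.mem_insert.1 hy with hy1 | hy2
        · subst hy1
          have hxv : x = v := hzonly _ hxy.symm
          rw [hxv] at hx2
          exact absurd hx2 hv
        · rcases Finset.mem_insert.1 hc with hc1 | hc2
          · subst hc1
            have hxv : x = v := hzonly _ hxc.symm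
            rw [hxv] at hx2
            exact absurd hx2 hv
          · exact hS.1 x hx2 y hy2 c hc2 hxy hxc
    have := hS.2 _ hdis (Finset.subset_insert _ _)
    rw [this]
    exact Finset.mem_insert_self _ _
  -- vmatch : any maximal dissoc set of the induced graph has a neighbor of v
  have vmatch : ∀ {S' : Finset ↥({w}ᶜ : Set V)},
      (T.induce ({w}ᶜ : Set V)).IsMaxDissocSet S' → ∃ c ∈ gins S', T.Adj v c := by
    intro S' hS'
    by_contra hun
    push_neg at hun
    have haS' : (⟨a, haw⟩ : ↥({w}ᶜ : Set V)) ∈ S' := by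
      have hdis : (T.induce ({w}ᶜ : Set V)).IsDissocSet (insert ⟨a, haw⟩ S') := by
        intro x hx y hy z hz hxy hxz
        have hxy' : T.Adj (x : V) (y : V) := hxy
        have hxz' : T.Adj (x : V) (z : V) := hxz
        rcases Finset.mem_insert.1 hx with hx1 | hx2
        · subst hx1
          exact Subtype.ext ((haonly _ hxy').trans (haonly _ hxz').symm)
        · rcases Finset.mem_insert.1 hy with hy1 | hy2
          · subst hy1
            have hxv : (x : V) = v := haonly _ hxy'.symm
            rcases Finset.mem_insert.1 hz with hz1 | hz2
            · subst hz1
              rfl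
            · rw [hxv] at hxz'
              exact absurd hxz' (hun _ (mem_gins_coe.2 hz2))
          · rcases Finset.mem_insert.1 hz with hz1 | hz2
            · subst hz1
              have hxv : (x : V) = v := haonly _ hxz'.symm
              rw [hxv] at hxy'
              exact absurd hxy' (hun _ (mem_gins_coe.2 hy2))
            · exact hS'.1 x hx2 y hy2 z hz2 hxy hxz
      have := hS'.2 _ hdis (Finset.subset_insert _ _)
      rw [this]
      exact Finset.mem_insert_self _ _
    exact hun a (mem_gins_coe.2 haS') haadj
    -- forward map lands in maximal dissoc sets of the induced graph
  have mapsTo : ∀ {S : Finset V}, T.IsMaxDissocSet S → ¬(v ∈ S ∧ w ∈ S) →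
      (T.induce ({w}ᶜ : Set V)).IsMaxDissocSet (fdel w S) := by
    intro S hS hne
    refine ⟨fdis hS.1, ?_⟩
    intro D hD hsub
    by_cases hwS : w ∈ S
    · have hvS : v ∉ S := fun hv => hne ⟨hv, hwS⟩
      have haS : a ∈ S := fact2 a hS hvS haadj haonly
      have hbS : b ∈ S := fact2 b hS hvS hbadj hbonly
      have hvD : ∀ (hvm : v ∈ ({w}ᶜ : Set V)), (⟨v, hvm⟩ : ↥({w}ᶜ : Set V)) ∉ D := by
        intro hvm hvD
        have haD : (⟨a, haw⟩ : ↥({w}ᶜ : Set V)) ∈ D := hsub (mem_fdel.2 haS)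
        have hbD : (⟨b, hbw⟩ : ↥({w}ᶜ : Set V)) ∈ D := hsub (mem_fdel.2 hbS)
        have heq := hD _ hvD _ haD _ hbD haadj hbadj
        exact hab (congrArg Subtype.val heq)
      have hSE : S = insert w (gins D) := by
        apply hS.2
        · intro x hx y hy z hz hxy hxz
          rcases Finset.mem_insert.1 hx with hx1 | hx2
          · subst hx1
            exact (hwonly _ hxy).trans (hwonly _ hxz).symm
          · rcases Finset.mem_insert.1 hy with hy1 | hy2
            · subst hy1
              have hxv : x = v := hwonly _ hxy.symm
              rw [hxv] at hx2
              obtain ⟨hxw', hx'⟩ := mem_gins.1 hx2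
              exact absurd hx' (hvD hxw')
            · rcases Finset.mem_insert.1 hz with hz1 | hz2
              · subst hz1
                have hxv : x = v := hwonly _ hxz.symm
                rw [hxv] at hx2
                obtain ⟨hxw', hx'⟩ := mem_gins.1 hx2
                exact absurd hx' (hvD hxw')
              · exact gdis hD x hx2 y hy2 z hz2 hxy hxz
        · intro x hx
          by_cases hxw : x = w
          · subst hxw
            exact Finset.mem_insert_self _ _
          · have hxm : (⟨x, hxw⟩ : ↥({w}ᶜ : Set V)) ∈ fdel w S := mem_fdel.2 hx
            exact Finset.mem_insert_of_mem (mem_gins_coe.2 (hsub hxm))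
      ext x
      rw [mem_fdel, hSE, Finset.mem_insert]
      constructor
      · rintro (h | h)
        · exact absurd h x.2
        · exact mem_gins_coe.1 h
      · intro h
        exact Or.inr (mem_gins_coe.2 h)
    · have hSE : S = gins D := by
        apply hS.2
        · exact gdis hD
        · intro x hx
          have hxw : x ≠ w := fun h => hwS (h ▸ hx)
          have hxm : (⟨x, hxw⟩ : ↥({w}ᶜ : Set V)) ∈ fdel w S := mem_fdel.2 hx
          exact mem_gins_coe.2 (hsub hxm)
      ext x
      rw [mem_fdel, hSE]
      exact mem_gins_coe
  -- injectivity on A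
  have injOn : ∀ {S1 S2 : Finset V},
      (T.IsMaxDissocSet S1 ∧ ¬(v ∈ S1 ∧ w ∈ S1)) →
      (T.IsMaxDissocSet S2 ∧ ¬(v ∈ S2 ∧ w ∈ S2)) →
      fdel w S1 = fdel w S2 → S1 = S2 := by
    intro S1 S2 h1 h2 hf
    have key : ∀ x, x ≠ w → (x ∈ S1 ↔ x ∈ S2) := by
      intro x hxw
      constructor
      · intro hx
        exact mem_fdel.1 (hf ▸ (mem_fdel.2 hx : (⟨x, hxw⟩ : ↥({w}ᶜ : Set V)) ∈ fdel w S1))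
      · intro hx
        exact mem_fdel.1 (hf ▸ (mem_fdel.2 hx : (⟨x, hxw⟩ : ↥({w}ᶜ : Set V)) ∈ fdel w S2))
    have wcase : ∀ {P Q : Finset V}, T.IsMaxDissocSet P → ¬(v ∈ P ∧ w ∈ P) →
        T.IsMaxDissocSet Q → ¬(v ∈ Q ∧ w ∈ Q) →
        (∀ x, x ≠ w → (x ∈ P ↔ x ∈ Q)) → w ∈ P → w ∈ Q := by
      intro P Q hP hneP hQ hneQ hkey hwP
      by_contra hwQ
      obtain ⟨hvQ, _⟩ := fact1 hQ hwQ
      have hvP : v ∈ P := (hkey v hvw).2 hvQ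
      exact hneP ⟨hvP, hwP⟩
    ext x
    by_cases hxw : x = w
    · subst hxw
      constructor
      · exact wcase h1.1 h1.2 h2.1 h2.2 key
      · exact wcase h2.1 h2.2 h1.1 h1.2 (fun x hx => (key x hx).symm)
    · exact key x hxw
  -- surjectivity
  have surj : ∀ {S' : Finset ↥({w}ᶜ : Set V)},
      (T.induce ({w}ᶜ : Set V)).IsMaxDissocSet S' →
      ∃ S : Finset V, (T.IsMaxDissocSet S ∧ ¬(v ∈ S ∧ w ∈ S)) ∧ fdel w S = S' := by
    intro S' hS'
    obtain ⟨c, hcE, hvc⟩ := vmatch hS'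
    have hcw : c ≠ w := ne_of_mem_gins hcE
    by_cases hvE : v ∈ gins S'
    · refine ⟨gins S', ⟨⟨gdis hS'.1, ?_⟩, ?_⟩, ?_⟩
      · intro D hD hsub
        have hwD : w ∉ D := by
          intro hwD
          have hvD : v ∈ D := hsub hvE
          have hcD : c ∈ D := hsub hcE
          exact hcw (hD _ hvD _ hcD _ hwD hvc hwadj)
        have hfe : S' = fdel w D := by
          apply hS'.2 _ (fdis hD)
          intro x hx
          exact mem_fdel.2 (hsub (mem_gins_coe.2 hx))
        apply Finset.Subset.antisymm hsub
        intro x hx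
        have hxw : x ≠ w := fun h => hwD (h ▸ hx)
        have : (⟨x, hxw⟩ : ↥({w}ᶜ : Set V)) ∈ fdel w D := mem_fdel.2 hx
        rw [← hfe] at this
        exact mem_gins_coe.2 this
      · intro ⟨_, hwE⟩
        exact ne_of_mem_gins hwE rfl
      · ext x
        rw [mem_fdel, mem_gins_coe]
    · refine ⟨insert w (gins S'), ⟨⟨?_, ?_⟩, ?_⟩, ?_⟩
      · intro x hx y hy z hz hxy hxz
        rcases Finset.mem_insert.1 hx with hx1 | hx2
        · subst hx1
          exact (hwonly _ hxy).trans (hwonly _ hxz).symm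
        · rcases Finset.mem_insert.1 hy with hy1 | hy2
          · subst hy1
            have hxv : x = v := hwonly _ hxy.symm
            rw [hxv] at hx2
            exact absurd hx2 hvE
          · rcases Finset.mem_insert.1 hz with hz1 | hz2
            · subst hz1
              have hxv : x = v := hwonly _ hxz.symm
              rw [hxv] at hx2
              exact absurd hx2 hvE
            · exact gdis hS'.1 x hx2 y hy2 z hz2 hxy hxz
      · intro D hD hsub
        have hfe : S' = fdel w D := by
          apply hS'.2 _ (fdis hD)
          intro x hx
          exact mem_fdel.2 (hsub (Finset.mem_insert_of_mem (mem_gins_coe.2 hx)))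
        apply Finset.Subset.antisymm hsub
        intro x hx
        by_cases hxw : x = w
        · subst hxw
          exact Finset.mem_insert_self _ _
        · have : (⟨x, hxw⟩ : ↥({w}ᶜ : Set V)) ∈ fdel w D := mem_fdel.2 hx
          rw [← hfe] at this
          exact Finset.mem_insert_of_mem (mem_gins_coe.2 this)
      · intro ⟨hvS, _⟩
        rcases Finset.mem_insert.1 hvS with h | h
        · exact hvw h
        · exact hvE h
      · ext x
        rw [mem_fdel, Finset.mem_insert, mem_gins_coe]
        constructor
        · rintro (h | h)
          · exact absurd h x.2
          · exact h
        · exact Or.inr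
  -- assemble
  have main : T.phi = (T.induce ({w}ᶜ : Set V)).phi +
      Set.ncard {S : Finset V | T.IsMaxDissocSet S ∧ v ∈ S ∧ w ∈ S} := by
    set A : Set (Finset V) := {S | T.IsMaxDissocSet S ∧ ¬(v ∈ S ∧ w ∈ S)} with hA
    set M : Set (Finset V) := {S | T.IsMaxDissocSet S ∧ v ∈ S ∧ w ∈ S} with hM
    have hpart : {S : Finset V | T.IsMaxDissocSet S} = A ∪ M := by
      ext S
      simp only [hA, hM, Set.mem_setOf_eq, Set.mem_union]
      tauto
    have hdisj : Disjoint A M := by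
      rw [Set.disjoint_left]
      rintro S ⟨_, hn⟩ ⟨_, hp⟩
      exact hn hp
    have h1 : T.phi = A.ncard + M.ncard := by
      rw [SimpleGraph.phi, hpart, Set.ncard_union_eq hdisj (Set.toFinite _) (Set.toFinite _)]
    have himg : {S' : Finset ↥({w}ᶜ : Set V) | (T.induce ({w}ᶜ : Set V)).IsMaxDissocSet S'}
        = fdel w '' A := by
      ext S'
      constructor
      · intro h
        obtain ⟨S, hS, hfe⟩ := surj h
        exact ⟨S, hS, hfe⟩
      · rintro ⟨S, hS, rfl⟩
        exact mapsTo hS.1 hS.2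
    have h2 : (T.induce ({w}ᶜ : Set V)).phi = A.ncard := by
      rw [SimpleGraph.phi, himg]
      exact Set.ncard_image_of_injOn (fun S1 h1 S2 h2 hf => injOn h1 h2 hf)
    rw [h1, h2]
  exact main
end
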